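/- For all μ > 0, the integral over X from 0 to ∞ of e^{−μX} · (e^{−X}/(2√π)) · (−2√X((X−10)X−2) + e^X √π X(X(2X−5)+6)(1 − erf(√X))) equals M(μ) = (1/μ⁴)·(3μ² − 5μ + 6 + (4μ⁵ + 16μ⁴ − 7μ² − 40μ − 24)/(4(1+μ)^{5/2})). -/

import Mathlib

/-!
The integrand has an elementary primitive of the form
`F(x) = e^{-(1+μ)x} √x P(x) / √π + e^{-μx} Q(x) erfc(√x) + C erf(√((1+μ)x)) / √(1+μ)`
with polynomials `P`, `Q` and a constant `C`: differentiating, the `erfc` terms force the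
linear ODE `Q' - μQ = x(x(2x-5)+6)/2`, solved by a cubic `Q`, and the remaining terms reduce to
one more polynomial identity, which fixes a quadratic `P` and `C`. Hence the integral is
`F(∞) - F(0) = C / √(1+μ) - Q(0) = M(μ)`. Integrability holds because `e^{-μx/2} M̌(x)` is
itself of this shape (with `C = 0`) and so tends to `0`.
-/

open Real MeasureTheory

/-- The Gauss error function. -/
noncomputable def erf (t : ℝ) : ℝ := (2 / Real.sqrt π) * ∫ s in (0 : ℝ)..t, Real.exp (-s ^ 2)

/-- The inverse Laplace transform `M̌(X)` of `M(μ)`. -/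
noncomputable def Mcheck (X : ℝ) : ℝ :=
  (Real.exp (-X) / (2 * Real.sqrt π)) *
    (-2 * Real.sqrt X * ((X - 10) * X - 2) +
      Real.exp X * Real.sqrt π * X * (X * (2 * X - 5) + 6) * (1 - erf (Real.sqrt X)))

/-- The function `M(μ)`. -/
noncomputable def Mfun (μ : ℝ) : ℝ :=
  (1 / μ ^ 4) *
    (3 * μ ^ 2 - 5 * μ + 6 +
      (4 * μ ^ 5 + 16 * μ ^ 4 - 7 * μ ^ 2 - 40 * μ - 24) / (4 * (1 + μ) ^ ((5 : ℝ) / 2)))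

open Filter Set Topology Asymptotics Polynomial

theorem hasDerivAt_erf (t : ℝ) : HasDerivAt erf (2 / √π * exp (-t ^ 2)) t := by
  have hc : Continuous fun s : ℝ => exp (-s ^ 2) := by fun_prop
  exact (intervalIntegral.integral_hasDerivAt_right (hc.intervalIntegrable _ _)
    (hc.stronglyMeasurableAtFilter _ _) hc.continuousAt).const_mul _

@[fun_prop]
theorem continuous_erf : Continuous erf :=
  continuous_iff_continuousAt.2 fun t => (hasDerivAt_erf t).continuousAt

@[simp]
theorem erf_zero : erf 0 = 0 := by simp [erf]

theorem tendsto_erf_atTop : Tendsto erf atTop (𝓝 1) := by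
  have hgauss : ∫ s in Ioi (0 : ℝ), exp (-s ^ 2) = √π / 2 := by
    simpa using integral_gaussian_Ioi 1
  have hint : IntegrableOn (fun s : ℝ => exp (-s ^ 2)) (Ioi 0) := by
    simpa using (integrable_exp_neg_mul_sq one_pos).integrableOn
  have h := (intervalIntegral_tendsto_integral_Ioi 0 hint tendsto_id).const_mul (2 / √π)
  have hone : 2 / √π * (√π / 2) = 1 := by field_simp
  rwa [hgauss, hone] at h

theorem hasDerivAt_erf_mul_sqrt (r : ℝ) {x : ℝ} (hx : 0 < x) :
    HasDerivAt (fun y => erf (r * √y)) (r * exp (-r ^ 2 * x) / (√π * √x)) x := by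
  have h := (hasDerivAt_erf (r * √x)).comp x ((hasDerivAt_sqrt hx.ne').const_mul r)
  refine h.congr_deriv ?_
  rw [mul_pow, sq_sqrt hx.le]
  field_simp

theorem tendsto_one_sub_erf_sqrt_atTop : Tendsto (fun y => 1 - erf √y) atTop (𝓝 0) := by
  simpa using (tendsto_erf_atTop.comp tendsto_sqrt_atTop).const_sub 1

theorem Polynomial.tendsto_eval_mul_exp_neg_mul_atTop (p : ℝ[X]) {b : ℝ} (hb : 0 < b) :
    Tendsto (fun x => p.eval x * exp (-b * x)) atTop (𝓝 0) := by
  induction p using Polynomial.induction_on' with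
  | monomial n c => simpa [mul_assoc] using
      (tendsto_rpow_mul_exp_neg_mul_atTop_nhds_zero n b hb).const_mul c
  | add p q hp hq => simpa [add_mul] using hp.add hq

theorem Polynomial.tendsto_sqrt_mul_eval_mul_exp_neg_mul_atTop (p : ℝ[X]) {b : ℝ} (hb : 0 < b) :
    Tendsto (fun x => √x * p.eval x * exp (-b * x)) atTop (𝓝 0) := by
  have hsqrt := tendsto_rpow_mul_exp_neg_mul_atTop_nhds_zero (1 / 2) (b / 2) (half_pos hb)
  have h := hsqrt.mul (p.tendsto_eval_mul_exp_neg_mul_atTop (half_pos hb))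
  rw [zero_mul] at h
  refine h.congr fun x => ?_
  rw [sqrt_eq_rpow, mul_mul_mul_comm, ← exp_add]
  ring_nf

/-- Ansatz for a primitive of `exp (-b * x) * Mcheck x`, with `erfc = 1 - erf`. -/
noncomputable def laplacePrimitive (b c : ℝ) (P Q : ℝ[X]) (y : ℝ) : ℝ :=
  exp (-(1 + b) * y) * √y * P.eval y / √π + exp (-b * y) * Q.eval y * (1 - erf √y)
    + c / √(1 + b) * erf (√(1 + b) * √y)

theorem continuous_laplacePrimitive (b c : ℝ) (P Q : ℝ[X]) :
    Continuous (laplacePrimitive b c P Q) := by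
  unfold laplacePrimitive; fun_prop

theorem laplacePrimitive_zero (b c : ℝ) (P Q : ℝ[X]) : laplacePrimitive b c P Q 0 = Q.eval 0 := by
  simp [laplacePrimitive]

theorem tendsto_laplacePrimitive {b : ℝ} (hb : 0 < b) (c : ℝ) (P Q : ℝ[X]) :
    Tendsto (laplacePrimitive b c P Q) atTop (𝓝 (c / √(1 + b))) := by
  have hb1 : 0 < 1 + b := by linarith
  have hsqrt := (P.tendsto_sqrt_mul_eval_mul_exp_neg_mul_atTop hb1).div_const √π
  have herfc := (Q.tendsto_eval_mul_exp_neg_mul_atTop hb).mul tendsto_one_sub_erf_sqrt_atTop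
  have herf := (tendsto_erf_atTop.comp
    (tendsto_sqrt_atTop.const_mul_atTop (sqrt_pos.2 hb1))).const_mul (c / √(1 + b))
  convert (hsqrt.add herfc).add herf using 1
  · ext y; simp only [laplacePrimitive, Function.comp]; ring
  · simp

/-- `hQ` matches the terms carrying `erfc √x`; after dividing by `exp (-(1 + b) * x) / (√π * √x)`,
`hP` matches all the others. -/
theorem hasDerivAt_laplacePrimitive {b c x : ℝ} {P Q : ℝ[X]} (hb : 0 < 1 + b) (hx : 0 < x)
    (hQ : Q.derivative.eval x - b * Q.eval x = x * (x * (2 * x - 5) + 6) / 2)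
    (hP : (1 / 2 - (1 + b) * x) * P.eval x + x * P.derivative.eval x - Q.eval x + c
      = -x * ((x - 10) * x - 2)) :
    HasDerivAt (laplacePrimitive b c P Q) (exp (-b * x) * Mcheck x) x := by
  have hsqrt := hasDerivAt_sqrt hx.ne'
  have herf := hasDerivAt_erf_mul_sqrt 1 hx
  simp only [one_mul, one_pow, neg_one_mul] at herf
  have H := ((((((hasDerivAt_id x).const_mul (-(1 + b))).exp.mul hsqrt).mul
    (P.hasDerivAt x)).div_const √π).add
    ((((hasDerivAt_id x).const_mul (-b)).exp.mul (Q.hasDerivAt x)).mul (herf.const_sub 1))).add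
    ((hasDerivAt_erf_mul_sqrt √(1 + b) hx).const_mul (c / √(1 + b)))
  refine H.congr_deriv ?_
  obtain ⟨s, hs, rfl⟩ : ∃ s, 0 < s ∧ x = s ^ 2 := ⟨√x, sqrt_pos.2 hx, (sq_sqrt hx.le).symm⟩
  have hexp : exp (-(1 + b) * s ^ 2) = exp (-b * s ^ 2) * exp (-s ^ 2) := by
    rw [← exp_add]; ring_nf
  have hsb : √(1 + b) ^ 2 = 1 + b := sq_sqrt hb.le
  have hsb0 : √(1 + b) ≠ 0 := (sqrt_pos.2 hb).ne'
  simp only [Mcheck, Pi.mul_apply, id, mul_one, exp_neg (s ^ 2), hexp, hsb, sqrt_sq hs.le]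
  linear_combination (norm := skip) (exp (-b * s ^ 2) * (exp (s ^ 2))⁻¹ / (√π * s)) * hP
    + (exp (-b * s ^ 2) * (1 - erf s)) * hQ
  field_simp
  ring

theorem integrableOn_exp_neg_mul_mul_Mcheck {μ : ℝ} (hμ : 0 < μ) :
    IntegrableOn (fun x => exp (-μ * x) * Mcheck x) (Ioi 0) := by
  have hshape (b x : ℝ) : exp (-b * x) * Mcheck x
      = laplacePrimitive b 0 (-((X - 10) * X - 2)) (C (1 / 2) * X * (X * (2 * X - 5) + 6)) x := by
    have hexp : exp (-(1 + b) * x) = exp (-b * x) * exp (-x) := by rw [← exp_add]; ring_nf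
    rw [laplacePrimitive, hexp, Mcheck, exp_neg x]
    simp only [eval_sub, eval_mul, eval_ofNat, eval_X, eval_C, eval_add, neg_sub, zero_div, zero_mul,
      add_zero]
    field_simp
    ring
  have hdecay : Tendsto (fun x => exp (-(μ / 2) * x) * Mcheck x) atTop (𝓝 0) := by
    have h := tendsto_laplacePrimitive (half_pos hμ) 0
      (-((X - 10) * X - 2)) (C (1 / 2) * X * (X * (2 * X - 5) + 6))
    rw [zero_div] at h
    exact h.congr fun x => (hshape _ x).symm
  refine integrable_of_isBigO_exp_neg (half_pos hμ) (by unfold Mcheck; fun_prop) ?_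
  have hsplit : (fun x => exp (-μ * x) * Mcheck x)
      = fun x => exp (-(μ / 2) * x) * (exp (-(μ / 2) * x) * Mcheck x) := by
    ext x; rw [← mul_assoc, ← exp_add]; ring_nf
  rw [hsplit]
  simpa using (isBigO_refl (fun x => exp (-(μ / 2) * x)) atTop).mul (hdecay.isBigO_one ℝ)

namespace Mcheck

noncomputable def sqrtPoly (μ : ℝ) : ℝ[X] :=
  C (1 / μ) * X ^ 2 + C ((3 - 10 * μ ^ 2) / (μ ^ 2 * (1 + μ))) * X
    + C ((12 + 11 * μ - 4 * μ ^ 2 - 28 * μ ^ 3 - 4 * μ ^ 4) / (2 * μ ^ 3 * (1 + μ) ^ 2))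

noncomputable def erfcPoly (μ : ℝ) : ℝ[X] :=
  C (-1 / μ) * X ^ 3 + C ((5 * μ - 6) / (2 * μ ^ 2)) * X ^ 2
    + C ((-3 * μ ^ 2 + 5 * μ - 6) / μ ^ 3) * X + C ((-3 * μ ^ 2 + 5 * μ - 6) / μ ^ 4)

noncomputable def erfCoeff (μ : ℝ) : ℝ :=
  (4 * μ ^ 5 + 16 * μ ^ 4 - 7 * μ ^ 2 - 40 * μ - 24) / (4 * μ ^ 4 * (1 + μ) ^ 2)

theorem erfcPoly_ode {μ : ℝ} (hμ : μ ≠ 0) (x : ℝ) :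
    (erfcPoly μ).derivative.eval x - μ * (erfcPoly μ).eval x = x * (x * (2 * x - 5) + 6) / 2 := by
  simp only [erfcPoly, derivative_mul, derivative_C, derivative_X_pow_succ,
    derivative_X, eval_add, eval_mul, eval_C, eval_pow, eval_X, eval_one, map_add, map_one,
    Nat.cast_ofNat, Nat.cast_one, pow_one, zero_mul, zero_add, mul_one, add_zero]
  field_simp
  ring

theorem sqrtPoly_ode {μ : ℝ} (hμ : μ ≠ 0) (hμ1 : 1 + μ ≠ 0) (x : ℝ) :
    (1 / 2 - (1 + μ) * x) * (sqrtPoly μ).eval x + x * (sqrtPoly μ).derivative.eval x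
      - (erfcPoly μ).eval x + erfCoeff μ = -x * ((x - 10) * x - 2) := by
  simp only [sqrtPoly, erfcPoly, erfCoeff, derivative_mul, derivative_C,
    derivative_X_pow_succ, derivative_X, eval_add, eval_mul, eval_C, eval_pow, eval_X, eval_one,
    map_add, map_one, Nat.cast_one, pow_one, zero_mul, zero_add, mul_one, add_zero]
  field_simp
  ring

theorem Mfun_eq {μ : ℝ} (hμ : μ ≠ 0) (hμ1 : 0 < 1 + μ) :
    Mfun μ = erfCoeff μ / √(1 + μ) - (erfcPoly μ).eval 0 := by
  have hpow : (1 + μ) ^ ((5 : ℝ) / 2) = (1 + μ) ^ 2 * √(1 + μ) := by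
    rw [show (5 : ℝ) / 2 = (2 : ℕ) + 1 / 2 by norm_num, rpow_add hμ1, rpow_natCast, sqrt_eq_rpow]
  have : √(1 + μ) ≠ 0 := (sqrt_pos.2 hμ1).ne'
  simp only [Mfun, erfcPoly, erfCoeff, hpow, eval_add, eval_mul, eval_C, eval_pow, eval_X,
    zero_pow two_ne_zero, zero_pow three_ne_zero, mul_zero, add_zero]
  field_simp
  ring

end Mcheck

theorem laplace_transform_of_Mcheck (μ : ℝ) (hμ : 0 < μ) :
    ∫ X in Set.Ioi (0 : ℝ), Real.exp (-μ * X) * Mcheck X = Mfun μ := by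
  have hμ1 : 0 < 1 + μ := by positivity
  have hprimitive (x : ℝ) (hx : x ∈ Ioi 0) : HasDerivAt
      (laplacePrimitive μ (Mcheck.erfCoeff μ) (Mcheck.sqrtPoly μ) (Mcheck.erfcPoly μ))
      (exp (-μ * x) * Mcheck x) x :=
    hasDerivAt_laplacePrimitive hμ1 hx
      (Mcheck.erfcPoly_ode hμ.ne' x) (Mcheck.sqrtPoly_ode hμ.ne' hμ1.ne' x)
  rw [integral_Ioi_of_hasDerivAt_of_tendsto (continuous_laplacePrimitive _ _ _ _).continuousWithinAt
    hprimitive (integrableOn_exp_neg_mul_mul_Mcheck hμ) (tendsto_laplacePrimitive hμ _ _ _),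
    laplacePrimitive_zero, Mcheck.Mfun_eq hμ.ne' hμ1]
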